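/- For α > 1, define c_α = (α + 1)/((α + 1)·log₂(α + 1) − α·log₂ α). Then c_α is strictly increasing as a function of α on (1, ∞), and for all α with φ < α ≤ 2 (where φ = (1 + √5)/2 is the golden ratio), 1.042 < c_α < 1.089. -/

import Mathlib

/-!
Writing `D(α) = (α+1)·log(α+1) − α·log α` for the denominator, `D' = log(α+1) − log α`, so the
quotient rule gives `(α+1)/D` the derivative `(D − (α+1)·D')/D² = log α / D²`, which is positive
for `α > 1`. The numerical bounds then only need `c_α` at the endpoints `1.617 < φ` and `2`, where
the logarithms are enclosed by rational numbers `m/n` through the integer comparisons `x^n ≶ 2^m`.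
-/

open Real

noncomputable def cA (α : ℝ) : ℝ :=
  (α + 1) / ((α + 1) * logb 2 (α + 1) - α * logb 2 α)

lemma Real.logb_lt_div_of_pow_lt {b x : ℝ} {m n : ℕ} (hb : 1 < b) (hx : 0 < x) (hn : 0 < n)
    (h : x ^ n < b ^ m) : logb b x < m / n := by
  have := logb_lt_logb hb (pow_pos hx n) h
  rw [logb_pow, logb_pow, logb_self_eq_one hb, mul_one, mul_comm] at this
  rwa [lt_div_iff₀ (by exact_mod_cast hn)]

lemma Real.div_lt_logb_of_pow_lt {b x : ℝ} {m n : ℕ} (hb : 1 < b) (hn : 0 < n)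
    (h : b ^ m < x ^ n) : (m : ℝ) / n < logb b x := by
  have := logb_lt_logb hb (by positivity) h
  rw [logb_pow, logb_pow, logb_self_eq_one hb, mul_one, mul_comm] at this
  rwa [div_lt_iff₀ (by exact_mod_cast hn)]

lemma Real.hasDerivAt_mul_logb (b : ℝ) {x : ℝ} (hx : x ≠ 0) :
    HasDerivAt (fun y ↦ y * logb b y) (logb b x + 1 / log b) x := by
  have h := (hasDerivAt_mul_log hx).div_const (log b)
  simp only [mul_div_assoc, add_div] at h
  exact h

noncomputable def cADenom (α : ℝ) : ℝ :=
  (α + 1) * logb 2 (α + 1) - α * logb 2 α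

lemma cA_eq_div_cADenom (α : ℝ) : cA α = (α + 1) / cADenom α := rfl

lemma cADenom_pos {α : ℝ} (hα : 1 < α) : 0 < cADenom α := by
  have hlog_lt : logb 2 α < logb 2 (α + 1) := logb_lt_logb one_lt_two (by linarith) (by linarith)
  have hlog_pos : 0 < logb 2 α := logb_pos one_lt_two hα
  unfold cADenom
  nlinarith

lemma hasDerivAt_cADenom {α : ℝ} (hα : 0 < α) :
    HasDerivAt cADenom (logb 2 (α + 1) - logb 2 α) α := by
  have hshift := (hasDerivAt_mul_logb 2 (by linarith : α + 1 ≠ 0)).comp_add_const α 1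
  exact (hshift.sub (hasDerivAt_mul_logb 2 hα.ne')).congr_deriv (by ring)

lemma hasDerivAt_cA {α : ℝ} (hα : 1 < α) :
    HasDerivAt cA (logb 2 α / cADenom α ^ 2) α := by
  have hquot := ((hasDerivAt_id' α).add_const 1).div (hasDerivAt_cADenom (by linarith))
    (cADenom_pos hα).ne'
  refine hquot.congr_deriv ?_
  unfold cADenom
  ring

lemma cA_strictMonoOn : StrictMonoOn cA (Set.Ioi 1) := by
  apply strictMonoOn_of_deriv_pos (convex_Ioi 1)
  · exact fun α hα ↦ (hasDerivAt_cA hα).continuousAt.continuousWithinAt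
  · intro α hα
    rw [interior_Ioi] at hα
    rw [(hasDerivAt_cA hα).deriv]
    have := logb_pos one_lt_two hα
    have := cADenom_pos hα
    positivity

lemma Real.goldenRatio_gt_d3 : (1.617 : ℝ) < goldenRatio := by
  rw [goldenRatio]
  have : (2.234 : ℝ) < √5 := by
    rw [lt_sqrt (by norm_num)]
    norm_num
  linarith

lemma cA_1617_gt : (1.042 : ℝ) < cA 1.617 := by
  have hupper : logb 2 (2.617 : ℝ) < 161 / 116 :=
    mod_cast logb_lt_div_of_pow_lt one_lt_two (by norm_num) (by norm_num) (by norm_num)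
  have hlower : (61 : ℝ) / 88 < logb 2 1.617 :=
    mod_cast div_lt_logb_of_pow_lt one_lt_two (by norm_num) (by norm_num)
  have hdenom := cADenom_pos (by norm_num : (1 : ℝ) < 1.617)
  rw [cA_eq_div_cADenom, lt_div_iff₀ hdenom, cADenom, show (1.617 : ℝ) + 1 = 2.617 by norm_num]
  linarith

lemma cA_two_lt : cA 2 < 1.089 := by
  have hlower : (569 : ℝ) / 359 < logb 2 3 :=
    mod_cast div_lt_logb_of_pow_lt one_lt_two (by norm_num)
      (mod_cast (by decide +kernel : 2 ^ 569 < 3 ^ 359))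
  have hdenom := cADenom_pos (by norm_num : (1 : ℝ) < 2)
  rw [cA_eq_div_cADenom, div_lt_iff₀ hdenom, cADenom, show (2 : ℝ) + 1 = 3 by norm_num,
    logb_self_eq_one one_lt_two]
  linarith

theorem cA_strictMono_and_bounds :
    StrictMonoOn cA (Set.Ioi (1 : ℝ)) ∧
    ∀ α : ℝ, (1 + Real.sqrt 5) / 2 < α → α ≤ 2 →
      1.042 < cA α ∧ cA α < 1.089 := by
  refine ⟨cA_strictMonoOn, fun α hφ hα2 ↦ ?_⟩
  have h1617 : (1.617 : ℝ) < α := goldenRatio_gt_d3.trans hφ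
  have h1 : α ∈ Set.Ioi 1 := Set.mem_Ioi.mpr (by linarith)
  constructor
  · calc (1.042 : ℝ) < cA 1.617 := cA_1617_gt
      _ < cA α := cA_strictMonoOn (by norm_num) h1 h1617
  · calc cA α ≤ cA 2 := cA_strictMonoOn.monotoneOn h1 (by norm_num) hα2
      _ < 1.089 := cA_two_lt
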